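/- With ρ₀^1 = (1/2)(|0⟩⟨0| + |+⟩⟨+|), ρ₁^1 = (1/2)(|1⟩⟨1| + |−⟩⟨−|), and ρ_b^k defined recursively by ρ₀^k = (ρ₀^{k−1}⊗ρ₀^1 + ρ₁^{k−1}⊗ρ₁^1)/2, ρ₁^k = (ρ₀^{k−1}⊗ρ₁^1 + ρ₁^{k−1}⊗ρ₀^1)/2, the trace distance D(ρ₀^k, ρ₁^k) = (√2/2)^k. -/

import Mathlib

open Matrix Kronecker ComplexOrder

/-- `|M| = √(Mᴴ M)`, the positive-semidefinite absolute value of a matrix. -/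
noncomputable def matAbs {n : Type*} [Fintype n] [DecidableEq n]
    (M : Matrix n n ℂ) : Matrix n n ℂ :=
  ((Matrix.posSemidef_conjTranspose_mul_self M).1.eigenvectorUnitary : Matrix n n ℂ) *
    diagonal ((↑) ∘ Real.sqrt ∘ (Matrix.posSemidef_conjTranspose_mul_self M).1.eigenvalues) *
    (star ((Matrix.posSemidef_conjTranspose_mul_self M).1.eigenvectorUnitary : Matrix n n ℂ))

/-- Trace distance `D(A,B) = (1/2) Tr |A - B|`. -/
noncomputable def traceDist {n : Type*} [Fintype n] [DecidableEq n]
    (A B : Matrix n n ℂ) : ℝ :=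
  (1 / 2) * (Matrix.trace (matAbs (A - B))).re

/-! The difference `Δₖ = ρ₀^k - ρ₁^k` obeys `Δₖ₊₁ = ½ Δₖ ⊗ Δ₁` with `Δ₁ = ½ [[1, 1], [1, -1]]`,
so `Δₖ = (2 / 4^k) • Hₖ` for the Sylvester–Hadamard matrix `Hₖ` of order `N = 2^k`. Since
`Hₖᴴ Hₖ = N • 1`, the absolute value `|c • Hₖ| = |c| √N • 1` is scalar, and
`D = |c| N √N / 2 = (√2 / 2)^k`. -/

lemma Real.sqrt_pow_of_nonneg {x : ℝ} (hx : 0 ≤ x) (k : ℕ) : √(x ^ k) = √x ^ k := by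
  rw [← Real.sqrt_sq (pow_nonneg (Real.sqrt_nonneg x) k), ← pow_mul, mul_comm, pow_mul,
    Real.sq_sqrt hx]

namespace Matrix

lemma sub_kronecker_sub {l m n p R : Type*} [Ring R] (A B : Matrix l m R) (C D : Matrix n p R) :
    (A - B) ⊗ₖ (C - D) = (A ⊗ₖ C + B ⊗ₖ D) - (A ⊗ₖ D + B ⊗ₖ C) := by
  ext ⟨i, j⟩ ⟨k, l⟩
  simp only [kroneckerMap_apply, sub_apply, add_apply]
  noncomm_ring

lemma reindex_smul_kronecker_sub {m n p R : Type*} [Ring R] (e : m × n ≃ p) (c : R)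
    (A B : Matrix m m R) (C D : Matrix n n R) :
    reindex e e (c • (A ⊗ₖ C + B ⊗ₖ D)) - reindex e e (c • (A ⊗ₖ D + B ⊗ₖ C)) =
      reindex e e (c • (A - B) ⊗ₖ (C - D)) := by
  rw [sub_kronecker_sub, smul_sub]
  rfl

lemma isHadamard_sylvester_two {R : Type*} [CommRing R] [StarRing R] :
    (!![1, 1; 1, -1] : Matrix (Fin 2) (Fin 2) R).IsHadamard := by
  have hself : (!![1, 1; 1, -1] : Matrix (Fin 2) (Fin 2) R)ᴴ = !![1, 1; 1, -1] := by
    ext i j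
    fin_cases i <;> fin_cases j <;> simp
  refine ⟨fun i j => ?_, ?_, ?_⟩
  · fin_cases i <;> fin_cases j <;> simp [Unitary.mem_iff]
  all_goals
    rw [hself]
    ext i j
    fin_cases i <;> fin_cases j <;> simp [mul_apply, one_add_one_eq_two]

end Matrix

section MatAbs

variable {n : Type*} [Fintype n] [DecidableEq n]

lemma matAbs_eq_cfc_sqrt (M : Matrix n n ℂ) : matAbs M = cfc Real.sqrt (Mᴴ * M) := by
  rw [(posSemidef_conjTranspose_mul_self M).1.cfc_eq, IsHermitian.cfc,
    Unitary.conjStarAlgAut_apply]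
  rfl

lemma matAbs_eq_sqrt_smul_one {M : Matrix n n ℂ} {r : ℝ} (h : Mᴴ * M = r • 1) :
    matAbs M = √r • 1 := by
  rw [matAbs_eq_cfc_sqrt, h, ← Algebra.algebraMap_eq_smul_one, cfc_algebraMap,
    Algebra.algebraMap_eq_smul_one]

lemma Matrix.IsHadamard.matAbs_smul {H : Matrix n n ℂ} (hH : H.IsHadamard) (c : ℝ) :
    matAbs (c • H) = (|c| * √(Fintype.card n)) • 1 := by
  have gram : (c • H)ᴴ * (c • H) = (c ^ 2 * Fintype.card n) • 1 := by
    rw [conjTranspose_smul, star_trivial, smul_mul_smul_comm, hH.conjTranspose_mul, ← sq,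
      Nat.cast_smul_eq_nsmul ℂ, ← Nat.cast_smul_eq_nsmul ℝ, smul_smul]
  rw [matAbs_eq_sqrt_smul_one gram, Real.sqrt_mul (sq_nonneg c), Real.sqrt_sq_eq_abs]

lemma traceDist_eq_of_sub_eq_smul_isHadamard {A B H : Matrix n n ℂ} (hH : H.IsHadamard) {c : ℝ}
    (h : A - B = c • H) :
    traceDist A B = |c| * Fintype.card n * √(Fintype.card n) / 2 := by
  rw [traceDist, h, hH.matAbs_smul, trace_smul, trace_one, Complex.real_smul,
    Complex.re_ofReal_mul, Complex.natCast_re]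
  ring

end MatAbs

theorem traceDist_conjugate_coding_pow
    (ρ : Bool → (k : ℕ) → Matrix (Fin (2 ^ k)) (Fin (2 ^ k)) ℂ)
    (h0 : ρ false 1 = (1/4 : ℂ) • !![3, 1; 1, 1])
    (h1 : ρ true 1 = (1/4 : ℂ) • !![1, -1; -1, 3])
    (hrec0 : ∀ k : ℕ, 1 ≤ k → ρ false (k + 1) =
      Matrix.reindex (finProdFinEquiv.trans (finCongr (by ring : 2 ^ k * 2 ^ 1 = 2 ^ (k + 1))))
        (finProdFinEquiv.trans (finCongr (by ring : 2 ^ k * 2 ^ 1 = 2 ^ (k + 1))))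
        ((1 / 2 : ℂ) • (ρ false k ⊗ₖ ρ false 1 + ρ true k ⊗ₖ ρ true 1)))
    (hrec1 : ∀ k : ℕ, 1 ≤ k → ρ true (k + 1) =
      Matrix.reindex (finProdFinEquiv.trans (finCongr (by ring : 2 ^ k * 2 ^ 1 = 2 ^ (k + 1))))
        (finProdFinEquiv.trans (finCongr (by ring : 2 ^ k * 2 ^ 1 = 2 ^ (k + 1))))
        ((1 / 2 : ℂ) • (ρ false k ⊗ₖ ρ true 1 + ρ true k ⊗ₖ ρ false 1))) :
    ∀ k : ℕ, 1 ≤ k →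
      traceDist (ρ false k) (ρ true k) = (Real.sqrt 2 / 2) ^ k := by
  have base : ρ false 1 - ρ true 1 = (1 / 2 : ℝ) • !![1, 1; 1, -1] := by
    rw [h0, h1, RCLike.real_smul_eq_coe_smul (K := ℂ)]
    ext i j
    fin_cases i <;> fin_cases j <;> norm_num
  have sylvester : ∀ k, 1 ≤ k → ∃ H : Matrix (Fin (2 ^ k)) (Fin (2 ^ k)) ℂ,
      H.IsHadamard ∧ ρ false k - ρ true k = (2 / 4 ^ k : ℝ) • H := by
    intro k hk
    induction k, hk using Nat.le_induction with
    | base => exact ⟨_, isHadamard_sylvester_two, by rw [base]; norm_num⟩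
    | succ k hk ih =>
      obtain ⟨H, hH, hΔ⟩ := ih
      set e := finProdFinEquiv.trans (finCongr (by ring : 2 ^ k * 2 ^ 1 = 2 ^ (k + 1)))
      refine ⟨reindex e e (H ⊗ₖ !![1, 1; 1, -1]),
        (hH.kronecker isHadamard_sylvester_two).reindex e e, ?_⟩
      rw [hrec0 k hk, hrec1 k hk, reindex_smul_kronecker_sub, hΔ, base]
      simp only [RCLike.real_smul_eq_coe_smul (K := ℂ), smul_kronecker, kronecker_smul,
        smul_smul, reindex_apply, submatrix_smul, Pi.smul_apply]
      congr 1
      push_cast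
      ring
  intro k hk
  obtain ⟨H, hH, hΔ⟩ := sylvester k hk
  rw [traceDist_eq_of_sub_eq_smul_isHadamard hH hΔ, Fintype.card_fin, abs_of_pos (by positivity)]
  push_cast
  rw [Real.sqrt_pow_of_nonneg zero_le_two, div_pow]
  field_simp
  rw [← pow_mul, mul_comm, pow_mul]
  norm_num
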